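/- arXiv:1201.1622 — 2 statements merged into one kernel-verified Lean document; each statement's English description precedes it below -/
import Mathlib

section
/- Let ζ be a primitive substitution on the alphabet 𝒜 = {a₁,…,a_m} with m ≥ 2 such that for every j the word ζ(a_j) begins with the two-letter word a₁a_j and ends with the letter a₁. Then p_ζ(n+1) − p_ζ(n) ≥ m − 1 for all n ≥ 1, and consequently p_ζ(n) > (m−1)n for all n ≥ 1. -/
open Matrix

/-! ### Substitutions and their dynamical systems -/

/-- Apply a substitution to a finite word, by concatenation. -/
def wordApply {A : Type*} (σ : A → List A) (w : List A) : List A := w.flatMap σ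

/-- The `n`-th iterate `σⁿ(a)` of the substitution applied to a letter `a`. -/
def substIter {A : Type*} (σ : A → List A) (n : ℕ) (a : A) : List A :=
  (wordApply σ)^[n] [a]

/-- A substitution is primitive if some (positive) iterate of every letter contains
every letter. -/
def IsPrimitive {A : Type*} (σ : A → List A) : Prop :=
  ∃ n : ℕ, 0 < n ∧ ∀ a b : A, b ∈ substIter σ n a

/-- A substitution is proper if for some `n ≥ 1` there are letters `a`, `b` such that
`σⁿ(c)` starts with `a` and ends with `b` for every letter `c`. -/
def IsProper {A : Type*} (σ : A → List A) : Prop :=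
  ∃ n : ℕ, 0 < n ∧ ∃ a b : A, ∀ c : A,
    (substIter σ n c).head? = some a ∧ (substIter σ n c).getLast? = some b

/-- The language of a substitution: all finite words occurring in some `σⁿ(a)`. -/
def Lang {A : Type*} (σ : A → List A) : Set (List A) :=
  { w | ∃ (n : ℕ) (a : A), w <:+: substIter σ n a }

/-- The complexity function of a substitution: the number of words of length `n`
in its language. -/
noncomputable def substComplexity {A : Type*} (σ : A → List A) (n : ℕ) : ℕ :=
  Set.ncard { w | w ∈ Lang σ ∧ w.length = n }

/-- The finite word `x_i x_{i+1} ⋯ x_{i+n-1}` occurring in a two-sided sequence `x`. -/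
def factor {A : Type*} (x : ℤ → A) (i : ℤ) (n : ℕ) : List A :=
  List.ofFn fun j : Fin n => x (i + (j : ℕ))

/-- The subshift `X_σ` of a substitution: all two-sided sequences all of whose finite
subwords belong to the language of `σ`. -/
def SubshiftSet {A : Type*} (σ : A → List A) : Set (ℤ → A) :=
  { x | ∀ (i : ℤ) (n : ℕ), factor x i n ∈ Lang σ }

/-- A substitution is aperiodic when its subshift is infinite. -/
def IsAperiodic {A : Type*} (σ : A → List A) : Prop :=
  (SubshiftSet σ).Infinite

/-- The `n`-th power of the shift on two-sided sequences. -/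
def zshift {A : Type*} (n : ℤ) (x : ℤ → A) : ℤ → A := fun m => x (m + n)

lemma factor_zshift {A : Type*} (x : ℤ → A) (n i : ℤ) (k : ℕ) :
    factor (zshift n x) i k = factor x (i + n) k := by
  unfold factor zshift
  congr 1
  funext j
  congr 1
  ring

lemma zshift_mem {A : Type*} {σ : A → List A} {x : ℤ → A}
    (hx : x ∈ SubshiftSet σ) (n : ℤ) : zshift n x ∈ SubshiftSet σ := by
  intro i k
  rw [factor_zshift]
  exact hx _ _

/-- The shift homeomorphism `T_σ` restricted to the subshift `X_σ`. -/
def shiftMap {A : Type*} (σ : A → List A) (x : SubshiftSet σ) : SubshiftSet σ :=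
  ⟨zshift 1 x.1, zshift_mem x.2 1⟩

/-- Conjugacy (topological isomorphism) of two substitution dynamical systems. -/
def Conjugate {A B : Type*} [TopologicalSpace A] [TopologicalSpace B]
    (σ : A → List A) (ζ : B → List B) : Prop :=
  ∃ h : SubshiftSet σ ≃ₜ SubshiftSet ζ, ∀ x, h (shiftMap σ x) = shiftMap ζ (h x)

/-- Orbit equivalence of two substitution dynamical systems: a homeomorphism between
the subshifts mapping shift-orbits onto shift-orbits. -/
def OrbitEquivalent {A B : Type*} [TopologicalSpace A] [TopologicalSpace B]
    (σ : A → List A) (ζ : B → List B) : Prop :=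
  ∃ h : SubshiftSet σ ≃ₜ SubshiftSet ζ,
    ∀ x y : SubshiftSet σ,
      (∃ n : ℤ, (y : ℤ → A) = zshift n x) ↔
      (∃ n : ℤ, ((h y : ℤ → B)) = zshift n (h x))

/-- Strong orbit equivalence: an orbit equivalence whose two orbit cocycles each have
at most one point of discontinuity. -/
def StrongOrbitEquivalent {A B : Type*} [TopologicalSpace A] [TopologicalSpace B]
    (σ : A → List A) (ζ : B → List B) : Prop :=
  ∃ h : SubshiftSet σ ≃ₜ SubshiftSet ζ,
    (∀ x y : SubshiftSet σ,
      (∃ n : ℤ, (y : ℤ → A) = zshift n x) ↔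
      (∃ n : ℤ, ((h y : ℤ → B)) = zshift n (h x))) ∧
    ∃ nc mc : SubshiftSet σ → ℤ,
      (∀ x, ((h (shiftMap σ x) : ℤ → B)) = zshift (nc x) (h x)) ∧
      (∀ x, zshift (mc x) (x : ℤ → A) = ((h.symm (shiftMap ζ (h x)) : ℤ → A))) ∧
      { x | ¬ ContinuousAt nc x }.Subsingleton ∧
      { x | ¬ ContinuousAt mc x }.Subsingleton

/-- The incidence matrix of a substitution: entry `(i, j)` counts the occurrences of
the letter `i` in `σ(j)`. -/
def incidenceMatrix {A : Type*} [DecidableEq A] (σ : A → List A) : Matrix A A ℕ :=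
  Matrix.of fun i j => (σ j).count i

/-! ### Primitive integer matrices and the clopen values set -/

/-- A square matrix with nonnegative integer entries is primitive if some positive power
has all entries strictly positive. -/
def MatPrimitive {I : Type*} [Fintype I] [DecidableEq I] (A : Matrix I I ℕ) : Prop :=
  ∃ n : ℕ, 0 < n ∧ ∀ i j, 0 < (A ^ n) i j

/-- `PerronPair A lam x` : `lam` is an eigenvalue of `A` (viewed as a real matrix) with
strictly positive eigenvector `x`; for a primitive matrix this characterizes the
Perron–Frobenius eigenvalue. -/
def PerronPair {I : Type*} [Fintype I] (A : Matrix I I ℕ) (lam : ℝ) (x : I → ℝ) : Prop :=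
  (∀ i, 0 < x i) ∧ (A.map (Nat.cast : ℕ → ℝ)) *ᵥ x = lam • x

/-- `H(x)`: the additive subgroup of `ℝ` generated by the entries of `x`. -/
def Hgroup {I : Type*} (x : I → ℝ) : Set ℝ :=
  (AddSubgroup.closure (Set.range x) : AddSubgroup ℝ)

/-- `S(A) = ⋃_{N ≥ 0} λ^{-N} H(x)` where `λ` is the Perron–Frobenius eigenvalue of `A`
and `x` its normalized positive eigenvector. -/
def Sval {I : Type*} (lam : ℝ) (x : I → ℝ) : Set ℝ :=
  { z | ∃ (N : ℕ) (h : ℝ), h ∈ Hgroup x ∧ z = h / lam ^ N }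

/-- A Perron number: a real algebraic integer `> 1` strictly larger in absolute value
than each of its other Galois conjugates (the other complex roots of its minimal
polynomial over `ℚ`). -/
def IsPerronNumber (lam : ℝ) : Prop :=
  IsIntegral ℤ lam ∧ 1 < lam ∧
  ∀ z : ℂ, (Polynomial.aeval z) (minpoly ℚ lam) = 0 → z ≠ (lam : ℂ) → ‖z‖ < lam

/-- The words of length `n` occurring in a two-sided sequence `u`. -/
def zLang {A : Type*} (u : ℤ → A) (n : ℕ) : Set (List A) :=
  { w | ∃ i : ℤ, w = factor u i n }

/-- The complexity function of a two-sided sequence. -/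
noncomputable def zComplexity {A : Type*} (u : ℤ → A) (n : ℕ) : ℕ :=
  (zLang u n).ncard

/-!
Every word of the language extends to the right, and the condition `ζ(a_j) = a₁ a_j ⋯`
produces, for each `n`, a word of length `n` followed in the language by every letter:
iterating `ζ` on the prefix `a₁ a_j` shows that `ζᵏ(a_j)` starts with
`ζᵏ⁻¹(a₁) ⋯ ζ(a₁) a₁ a_j`, whose part before `a_j` does not depend on `j`.
Hence the words of length `n + 1` include one right extension of each word of length `n`
and `m - 1` further extensions of that special word: `p(n + 1) ≥ p(n) + (m - 1)`.
Primitivity puts every letter in the language, so `p(1) = m`.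
-/

open Function

section Counting

variable {A : Type*}

lemma finite_setOf_mem_and_length_eq [Finite A] (S : Set (List A)) (n : ℕ) :
    {w | w ∈ S ∧ w.length = n}.Finite :=
  (List.finite_length_eq A n).subset fun _ hw => hw.2

lemma ncard_length_eq_add_card_sub_one_le [Fintype A] {S : Set (List A)} {n : ℕ}
    (hext : ∀ w ∈ S, w.length = n → ∃ x, w ++ [x] ∈ S) {W : List A} (hWS : W ∈ S)
    (hWlen : W.length = n) (hW : ∀ j, W ++ [j] ∈ S) :
    {w | w ∈ S ∧ w.length = n}.ncard + (Fintype.card A - 1) ≤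
      {w | w ∈ S ∧ w.length = n + 1}.ncard := by
  classical
  set Sn := {w | w ∈ S ∧ w.length = n}
  have : Finite Sn := (finite_setOf_mem_and_length_eq S n).to_subtype
  have : Finite {w | w ∈ S ∧ w.length = n + 1} :=
    (finite_setOf_mem_and_length_eq S (n + 1)).to_subtype
  choose e he using fun w : Sn => hext w.1 w.2.1 w.2.2
  let extend : Sn → {w | w ∈ S ∧ w.length = n + 1} :=
    fun w => ⟨w.1 ++ [e w], he w, by simp [w.2.2]⟩
  let branch : {j // j ≠ e ⟨W, hWS, hWlen⟩} → {w | w ∈ S ∧ w.length = n + 1} :=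
    fun j => ⟨W ++ [j.1], hW j, by simp [hWlen]⟩
  have hinj : Injective (Sum.elim extend branch) := by
    refine Injective.sumElim ?_ ?_ ?_
    · intro w w' h
      exact Subtype.ext (List.append_singleton_inj.mp (congrArg Subtype.val h)).1
    · intro j j' h
      exact Subtype.ext (List.append_singleton_inj.mp (congrArg Subtype.val h)).2
    · intro w j h
      obtain ⟨hw, hj⟩ := List.append_singleton_inj.mp (congrArg Subtype.val h)
      exact j.2 (hj ▸ congrArg e (Subtype.ext hw))
  simpa [Nat.card_sum] using Nat.card_le_card_of_injective _ hinj

end Counting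

section Substitution

variable {A : Type*} {σ : A → List A}

lemma substIter_zero (σ : A → List A) (a : A) : substIter σ 0 a = [a] := rfl

lemma iterate_wordApply (σ : A → List A) (k : ℕ) (w : List A) :
    (wordApply σ)^[k] w = w.flatMap (substIter σ k) := by
  induction k generalizing w with
  | zero => exact (List.flatMap_singleton' w).symm
  | succ k ih =>
    rw [iterate_succ_apply, ih, wordApply, List.flatMap_assoc]
    congr 1
    funext a
    rw [substIter, iterate_succ_apply, ih]
    simp [wordApply]

lemma substIter_add (σ : A → List A) (k n : ℕ) (a : A) :
    substIter σ (k + n) a = (substIter σ n a).flatMap (substIter σ k) := by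
  rw [substIter, iterate_add_apply, ← substIter, iterate_wordApply]

lemma substIter_succ (σ : A → List A) (k : ℕ) (a : A) :
    substIter σ (k + 1) a = (σ a).flatMap (substIter σ k) := by
  rw [substIter_add]
  simp [substIter, wordApply]

lemma substIter_ne_nil (hne : ∀ a, σ a ≠ []) (k : ℕ) (a : A) : substIter σ k a ≠ [] := by
  induction k generalizing a with
  | zero => simp [substIter_zero]
  | succ k ih =>
    obtain ⟨b, hb⟩ := List.exists_mem_of_ne_nil _ (hne a)
    rw [substIter_succ, Ne, List.flatMap_eq_nil_iff]
    exact fun h => ih b (h b hb)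

lemma IsPrimitive.ne_nil (hprim : IsPrimitive σ) (a : A) : σ a ≠ [] := by
  obtain ⟨N, hN, hmem⟩ := hprim
  obtain ⟨k, rfl⟩ := Nat.exists_eq_add_of_lt hN
  intro ha
  simpa [← Nat.add_assoc, substIter_succ, ha] using hmem a a

lemma mem_lang_of_infix_apply {w : List A} {a : A} (h : w <:+: σ a) : w ∈ Lang σ :=
  ⟨1, a, by simpa [substIter, wordApply] using h⟩

lemma mem_lang_of_infix {w v : List A} (h : w <:+: v) (hv : v ∈ Lang σ) : w ∈ Lang σ := by
  obtain ⟨n, a, hva⟩ := hv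
  exact ⟨n, a, h.trans hva⟩

lemma flatMap_substIter_mem_lang {w : List A} (hw : w ∈ Lang σ) (k : ℕ) :
    w.flatMap (substIter σ k) ∈ Lang σ := by
  obtain ⟨n, a, s, t, h⟩ := hw
  refine ⟨k + n, a, s.flatMap (substIter σ k), t.flatMap (substIter σ k), ?_⟩
  simp [substIter_add, ← h]

lemma IsPrimitive.singleton_mem_lang (hprim : IsPrimitive σ) (b : A) : [b] ∈ Lang σ := by
  obtain ⟨N, -, hmem⟩ := hprim
  exact ⟨N, b, (List.singleton_infix_iff _ _).mpr (hmem b b)⟩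

lemma IsPrimitive.card_le_substComplexity_one [Fintype A] (hprim : IsPrimitive σ) :
    Fintype.card A ≤ substComplexity σ 1 := by
  have hsub : Set.range (fun b : A => [b]) ⊆ {w | w ∈ Lang σ ∧ w.length = 1} := by
    rintro _ ⟨b, rfl⟩
    exact ⟨hprim.singleton_mem_lang b, rfl⟩
  rw [← Nat.card_eq_fintype_card, ← Set.ncard_range_of_injective List.singleton_injective]
  exact Set.ncard_le_ncard hsub (finite_setOf_mem_and_length_eq _ 1)

lemma exists_append_singleton_infix {w u v : List A} (h : w <:+: u) (hv : v ≠ []) :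
    ∃ y, w ++ [y] <:+: u ++ v := by
  obtain ⟨s, t, rfl⟩ := h
  obtain ⟨y, r, hyr⟩ := List.exists_cons_of_ne_nil (List.append_ne_nil_of_right_ne_nil t hv)
  exact ⟨y, s, r, by simp [← hyr]⟩

lemma IsPrimitive.exists_append_singleton_mem_lang (hprim : IsPrimitive σ) {b c : A}
    (hbc : [b, c] ∈ Lang σ) {w : List A} (hw : w ∈ Lang σ) : ∃ y, w ++ [y] ∈ Lang σ := by
  have hne := hprim.ne_nil
  obtain ⟨n, a, hwa⟩ := hw
  obtain ⟨N, -, hmem⟩ := hprim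
  -- `σⁿ(a)` occurs in `σⁿ⁺ᴺ(b)`, which is followed by the nonempty `σⁿ⁺ᴺ(c)` in the language.
  have hab : substIter σ n a <:+: substIter σ (n + N) b := by
    rw [substIter_add]
    exact List.infix_flatMap_of_mem (hmem b a) _
  have hbcL : substIter σ (n + N) b ++ substIter σ (n + N) c ∈ Lang σ := by
    simpa using flatMap_substIter_mem_lang hbc (n + N)
  obtain ⟨y, hy⟩ := exists_append_singleton_infix (hwa.trans hab)
    (substIter_ne_nil hne (n + N) c)
  exact ⟨y, mem_lang_of_infix hy hbcL⟩

lemma exists_common_prefix_substIter (a₁ : A) (hpre : ∀ j, [a₁, j] <+: σ j) (k : ℕ) :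
    ∃ P : List A, k ≤ P.length ∧ ∀ j, P ++ [j] <+: substIter σ k j := by
  induction k with
  | zero => exact ⟨[], le_rfl, fun j => List.prefix_refl _⟩
  | succ k ih =>
    obtain ⟨P, hlen, hP⟩ := ih
    refine ⟨substIter σ k a₁ ++ P, ?_, fun j => ?_⟩
    · have := (hP a₁).length_le
      simp only [List.length_append, List.length_singleton] at this ⊢
      omega
    · obtain ⟨t, ht⟩ := hpre j
      have : substIter σ k a₁ ++ substIter σ k j <+: substIter σ (k + 1) j := by
        rw [substIter_succ, ← ht]
        simp
      rw [List.append_assoc]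
      exact ((List.prefix_append_right_inj _).mpr (hP j)).trans this

lemma exists_length_eq_forall_append_singleton_mem_lang (a₁ : A)
    (hpre : ∀ j, [a₁, j] <+: σ j) (n : ℕ) :
    ∃ W : List A, W.length = n ∧ ∀ j, W ++ [j] ∈ Lang σ := by
  obtain ⟨P, hlen, hP⟩ := exists_common_prefix_substIter a₁ hpre n
  refine ⟨P.drop (P.length - n), by simp; omega, fun j => ⟨n, j, ?_⟩⟩
  have hsuf : P.drop (P.length - n) ++ [j] <:+ P ++ [j] := by
    obtain ⟨s, hs⟩ := List.drop_suffix (P.length - n) P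
    exact ⟨s, by rw [← List.append_assoc, hs]⟩
  exact hsuf.isInfix.trans (hP j).isInfix

end Substitution

theorem complexity_lower_bound_of_proper_form_general
    {A : Type*} [Fintype A] (m : ℕ) (hcard : Fintype.card A = m)
    (a1 : A) (ζ : A → List A) (hprim : IsPrimitive ζ)
    (hpre : ∀ j : A, [a1, j] <+: ζ j) :
    (∀ n : ℕ, 1 ≤ n → substComplexity ζ n + (m - 1) ≤ substComplexity ζ (n + 1)) ∧
    (∀ n : ℕ, 1 ≤ n → (m - 1) * n < substComplexity ζ n) := by
  subst hcard
  have hstep (n : ℕ) :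
      substComplexity ζ n + (Fintype.card A - 1) ≤ substComplexity ζ (n + 1) := by
    obtain ⟨W, hWlen, hW⟩ := exists_length_eq_forall_append_singleton_mem_lang a1 hpre n
    have hext (w) (hw : w ∈ Lang ζ) (_ : w.length = n) : ∃ y, w ++ [y] ∈ Lang ζ :=
      hprim.exists_append_singleton_mem_lang (mem_lang_of_infix_apply (hpre a1).isInfix) hw
    exact ncard_length_eq_add_card_sub_one_le hext
      (mem_lang_of_infix (List.prefix_append W [a1]).isInfix (hW a1)) hWlen hW
  refine ⟨fun n _ => hstep n, fun n hn => ?_⟩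
  induction n, hn using Nat.le_induction with
  | base =>
    have := hprim.card_le_substComplexity_one
    have := Fintype.card_pos_iff.mpr ⟨a1⟩
    omega
  | succ n _ ih =>
    have := hstep n
    rw [Nat.mul_succ]
    omega

/-- a primitive substitution on `m ≥ 2` letters whose images begin with
`a₁ a_j` and end with `a₁` has complexity increments at least `m - 1`, hence
`p_ζ(n) > (m-1)n`. -/
theorem complexity_lower_bound_of_proper_form
    {A : Type*} [Fintype A] (m : ℕ) (hcard : Fintype.card A = m) (hm : 2 ≤ m)
    (a1 : A) (ζ : A → List A) (hprim : IsPrimitive ζ)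
    (hpre : ∀ j : A, [a1, j] <+: ζ j)
    (hsuf : ∀ j : A, [a1] <:+ ζ j) :
    (∀ n : ℕ, 1 ≤ n → substComplexity ζ n + (m - 1) ≤ substComplexity ζ (n + 1)) ∧
    (∀ n : ℕ, 1 ≤ n → (m - 1) * n < substComplexity ζ n) :=
  complexity_lower_bound_of_proper_form_general m hcard a1 ζ hprim hpre
end

section
/- Let A be a primitive s×s matrix with nonnegative integer entries whose Perron–Frobenius eigenvalue λ satisfies λ > 1, and let k = deg λ. If P is a primitive l×l matrix with nonnegative integer entries, with Perron–Frobenius eigenvalue β, such that S(P) = α·S(A) for some real α > 0, then deg β ≥ k. -/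
open Matrix

open Pointwise

/-!
Since `y` is, up to scaling, the only positive `β`-eigenvector of the primitive integer matrix
`P`, and `β`-eigenvectors can be found over `ℚ(β)`, the normalization `∑ yᵢ = 1` puts every
`yᵢ`, hence all of `S(P)`, inside `ℚ(β)`. Because `∑ xᵢ = 1`, both `α` and `α / λ` lie in `α · S(A) = S(P)`,
so `λ ∈ ℚ(β)` and `deg λ ≤ [ℚ(β) : ℚ] = deg β`.
-/

open Polynomial IntermediateField

namespace Matrix

theorem map_natCast_eq_map_algebraMap {I R : Type*} [Semiring R] (F : Type*) [CommSemiring F]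
    [Algebra F R] (P : Matrix I I ℕ) :
    P.map (Nat.cast : ℕ → R) = (P.map (Nat.cast : ℕ → F)).map (algebraMap F R) := by
  ext i j
  simp

variable {I : Type*} [Fintype I] [DecidableEq I]

theorem pow_mulVec_of_mulVec_eq_smul {R : Type*} [CommRing R] {M : Matrix I I R} {μ : R}
    {v : I → R} (h : M *ᵥ v = μ • v) (n : ℕ) : (M ^ n) *ᵥ v = μ ^ n • v := by
  induction n with
  | zero => simp
  | succ n ih => rw [pow_succ', ← mulVec_mulVec, ih, mulVec_smul, h, smul_smul, pow_succ]

theorem exists_eq_smul_of_mulVec_eq_smul_of_pow_pos {M : Matrix I I ℝ} {n : ℕ}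
    (hM : ∀ i j, 0 < (M ^ n) i j) {β : ℝ} {y w : I → ℝ} (hy : ∀ i, 0 < y i)
    (hMy : M *ᵥ y = β • y) (hMw : M *ᵥ w = β • w) : ∃ c : ℝ, w = c • y := by
  cases isEmpty_or_nonempty I
  · exact ⟨0, Subsingleton.elim _ _⟩
  -- subtract the largest multiple of `y` below `w`: the remainder is a nonnegative
  -- eigenvector with a zero entry, which positivity of `M ^ n` forces to vanish
  obtain ⟨i₀, hi₀⟩ := Finite.exists_min fun i => w i / y i
  set c := w i₀ / y i₀
  set v := w - c • y
  have hv_nonneg : ∀ i, 0 ≤ v i := fun i => by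
    simpa [v, sub_nonneg] using (le_div_iff₀ (hy i)).mp (hi₀ i)
  have hv₀ : v i₀ = 0 := by simp [v, c, div_mul_cancel₀ _ (hy i₀).ne']
  have hMv : (M ^ n) *ᵥ v = β ^ n • v := by
    simp only [v, mulVec_sub, mulVec_smul, pow_mulVec_of_mulVec_eq_smul hMy,
      pow_mulVec_of_mulVec_eq_smul hMw, smul_sub, smul_comm c]
  have hsum : ∑ j, (M ^ n) i₀ j * v j = 0 := by
    simpa [mulVec, dotProduct, hv₀] using congrFun hMv i₀
  refine ⟨c, funext fun j => ?_⟩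
  have hvj : (M ^ n) i₀ j * v j = 0 :=
    (Finset.sum_eq_zero_iff_of_nonneg fun k _ => mul_nonneg (hM i₀ k).le (hv_nonneg k)).mp
      hsum j (Finset.mem_univ j)
  simpa [v, sub_eq_zero] using (mul_eq_zero.mp hvj).resolve_left (hM i₀ j).ne'

theorem det_scalar_sub_eq_zero_of_mulVec_eq_smul {L : Type*} [Field L] {N : Matrix I I L}
    {μ : L} {v : I → L} (hv : v ≠ 0) (h : N *ᵥ v = μ • v) : (scalar I μ - N).det = 0 :=
  exists_mulVec_eq_zero_iff.mp ⟨v, hv, by simp [sub_mulVec, h]⟩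

variable {K L : Type*} [Field K] [Field L] [Algebra K L]

theorem isIntegral_of_map_mulVec_eq_smul {M : Matrix I I K} {μ : L} {v : I → L} (hv : v ≠ 0)
    (h : M.map (algebraMap K L) *ᵥ v = μ • v) : IsIntegral K μ :=
  ⟨M.charpoly, M.charpoly_monic, by
    rw [← aeval_def, ← eval_map_algebraMap, ← charpoly_map, eval_charpoly]
    exact det_scalar_sub_eq_zero_of_mulVec_eq_smul hv h⟩

theorem exists_mulVec_eq_smul_of_map {M : Matrix I I K} {μ : K} {v : I → L} (hv : v ≠ 0)
    (h : M.map (algebraMap K L) *ᵥ v = algebraMap K L μ • v) :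
    ∃ w : I → K, w ≠ 0 ∧ M *ᵥ w = μ • w := by
  have hdet : (scalar I μ - M).det = 0 := by
    apply FaithfulSMul.algebraMap_injective K L
    rw [map_zero, RingHom.map_det, ← det_scalar_sub_eq_zero_of_mulVec_eq_smul hv h]
    congr 1
    ext i j
    by_cases hij : i = j <;> simp [hij]
  obtain ⟨w, hw, hMw⟩ := exists_mulVec_eq_zero_iff.mpr hdet
  exact ⟨w, hw, by simpa [sub_mulVec, sub_eq_zero, eq_comm] using hMw⟩

end Matrix

section Perron

variable {I : Type*} [Fintype I] {P : Matrix I I ℕ} {β : ℝ} {y : I → ℝ}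

theorem PerronPair.ne_zero [Nonempty I] (h : PerronPair P β y) : y ≠ 0 := fun hy =>
  (h.1 (Classical.arbitrary I)).ne' (congrFun hy _)

variable [DecidableEq I]

theorem MatPrimitive.exists_pow_map_pos (hP : MatPrimitive P) :
    ∃ n, ∀ i j, 0 < (P.map (Nat.cast : ℕ → ℝ) ^ n) i j := by
  obtain ⟨n, -, hn⟩ := hP
  refine ⟨n, fun i j => ?_⟩
  have hpow : P.map (Nat.cast : ℕ → ℝ) ^ n = (P ^ n).map Nat.cast :=
    (map_pow (Nat.castRingHom ℝ).mapMatrix P n).symm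
  simpa [hpow] using hn i j

theorem PerronPair.isIntegral [Nonempty I] (h : PerronPair P β y) : IsIntegral ℚ β :=
  Matrix.isIntegral_of_map_mulVec_eq_smul h.ne_zero
    (Matrix.map_natCast_eq_map_algebraMap (R := ℝ) ℚ P ▸ h.2)

theorem PerronPair.mem_of_matPrimitive [Nonempty I] (hP : MatPrimitive P)
    (h : PerronPair P β y) (hsum : ∑ i, y i = 1) (K : IntermediateField ℚ ℝ) (hβ : β ∈ K)
    (i : I) : y i ∈ K := by
  let f := algebraMap K ℝ
  have hPy : (P.map (Nat.cast : ℕ → K)).map f *ᵥ y = f ⟨β, hβ⟩ • y := by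
    rw [← Matrix.map_natCast_eq_map_algebraMap]
    exact h.2
  obtain ⟨w, hw, hPw⟩ := Matrix.exists_mulVec_eq_smul_of_map h.ne_zero hPy
  have hPfw : P.map (Nat.cast : ℕ → ℝ) *ᵥ (f ∘ w) = β • (f ∘ w) := by
    funext j
    rw [Matrix.map_natCast_eq_map_algebraMap K P, ← RingHom.map_mulVec, hPw]
    simp [f]
  obtain ⟨n, hn⟩ := hP.exists_pow_map_pos
  obtain ⟨c, hc⟩ := Matrix.exists_eq_smul_of_mulVec_eq_smul_of_pow_pos hn h.1 h.2 hPfw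
  have hc_sum : f (∑ j, w j) = c :=
    calc f (∑ j, w j) = ∑ j, (f ∘ w) j := map_sum f w _
      _ = c := by rw [hc]; simp [← Finset.mul_sum, hsum]
  have hc0 : c ≠ 0 := by
    rintro rfl
    exact hw (funext fun j => f.injective (by simpa using congrFun hc j))
  have hyi : y i = c⁻¹ * f (w i) := by
    rw [show f (w i) = c * y i from congrFun hc i, inv_mul_cancel_left₀ hc0]
  rw [hyi, ← hc_sum]
  exact mul_mem (inv_mem (SetLike.coe_mem _)) (SetLike.coe_mem _)

end Perron
section Sval

variable {I : Type*} {x : I → ℝ}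

theorem Hgroup_subset (K : Subfield ℝ) (hx : ∀ i, x i ∈ K) : Hgroup x ⊆ K :=
  (AddSubgroup.closure_le K.toAddSubgroup).mpr (Set.range_subset_iff.mpr hx)

theorem Sval_subset {lam : ℝ} (K : Subfield ℝ) (hlam : lam ∈ K) (hx : ∀ i, x i ∈ K) :
    Sval lam x ⊆ K := by
  rintro _ ⟨N, h, hh, rfl⟩
  exact div_mem (Hgroup_subset K hx hh) (pow_mem hlam N)

variable [Fintype I]

theorem one_mem_Hgroup (hsum : ∑ i, x i = 1) : (1 : ℝ) ∈ Hgroup x :=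
  hsum ▸ AddSubgroup.sum_mem _ fun i _ => AddSubgroup.subset_closure ⟨i, rfl⟩

theorem inv_pow_mem_Sval (hsum : ∑ i, x i = 1) (lam : ℝ) (N : ℕ) :
    (lam ^ N)⁻¹ ∈ Sval lam x :=
  ⟨N, 1, one_mem_Hgroup hsum, (one_div _).symm⟩

theorem mem_of_smul_Sval_subset {K : Subfield ℝ} {lam α : ℝ} (hsum : ∑ i, x i = 1)
    (hα : α ≠ 0) (h : α • Sval lam x ⊆ K) : lam ∈ K := by
  have h₀ := h (Set.smul_mem_smul_set (inv_pow_mem_Sval hsum lam 0))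
  have h₁ := h (Set.smul_mem_smul_set (inv_pow_mem_Sval hsum lam 1))
  simpa [div_mul_cancel_left₀ hα] using div_mem h₀ h₁

end Sval

theorem minpoly_natDegree_le_of_mem_adjoin_simple {F E : Type*} [Field F] [Field E]
    [Algebra F E] {a b : E} (hb : IsIntegral F b) (ha : a ∈ F⟮b⟯) :
    (minpoly F a).natDegree ≤ (minpoly F b).natDegree := by
  have := adjoin.finiteDimensional hb
  calc (minpoly F a).natDegree = (minpoly F (⟨a, ha⟩ : F⟮b⟯)).natDegree := by
        rw [← minpoly.algebraMap_eq (algebraMap F⟮b⟯ E).injective]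
        rfl
    _ ≤ Module.finrank F F⟮b⟯ := minpoly.natDegree_le _
    _ = (minpoly F b).natDegree := adjoin.finrank hb

theorem degree_lower_bound_of_Sval_eq_general
    {s l k : ℕ} (lam : ℝ) (x : Fin s → ℝ)
    (hsum : ∑ i, x i = 1)
    (hk : (minpoly ℚ lam).natDegree = k)
    (P : Matrix (Fin l) (Fin l) ℕ) (β : ℝ) (y : Fin l → ℝ)
    (hPprim : MatPrimitive P) (hPpf : PerronPair P β y) (hysum : ∑ i, y i = 1)
    (α : ℝ) (hα : 0 < α) (hS : Sval β y = α • Sval lam x) :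
    k ≤ (minpoly ℚ β).natDegree := by
  have : Nonempty (Fin l) :=
    Finset.univ_nonempty_iff.mp (Finset.nonempty_of_sum_ne_zero (hysum ▸ one_ne_zero))
  have hβ : β ∈ ℚ⟮β⟯ := mem_adjoin_simple_self ℚ β
  have hSβ : Sval β y ⊆ ℚ⟮β⟯.toSubfield :=
    Sval_subset _ hβ (hPpf.mem_of_matPrimitive hPprim hysum _ hβ)
  have hlam : lam ∈ ℚ⟮β⟯ := mem_of_smul_Sval_subset hsum hα.ne' (hS ▸ hSβ)
  exact hk ▸ minpoly_natDegree_le_of_mem_adjoin_simple hPpf.isIntegral hlam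

/-- if a primitive matrix `P` with Perron–Frobenius eigenvalue `β` satisfies
`S(P) = α · S(A)` for some `α > 0`, then `deg β ≥ deg λ`. -/
theorem degree_lower_bound_of_Sval_eq
    {s l k : ℕ} (A : Matrix (Fin s) (Fin s) ℕ) (lam : ℝ) (x : Fin s → ℝ)
    (hprim : MatPrimitive A) (hpf : PerronPair A lam x) (hsum : ∑ i, x i = 1)
    (hlam : 1 < lam) (hk : (minpoly ℚ lam).natDegree = k)
    (P : Matrix (Fin l) (Fin l) ℕ) (β : ℝ) (y : Fin l → ℝ)
    (hPprim : MatPrimitive P) (hPpf : PerronPair P β y) (hysum : ∑ i, y i = 1)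
    (α : ℝ) (hα : 0 < α) (hS : Sval β y = α • Sval lam x) :
    k ≤ (minpoly ℚ β).natDegree :=
  degree_lower_bound_of_Sval_eq_general lam x hsum hk P β y hPprim hPpf hysum α hα hS
end
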